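/- arXiv:1401.0320 — 2 statements merged into one kernel-verified Lean document; each statement's English description precedes it below -/
import Mathlib

section
/- Assume A is almost periodic, the family (t_n^{(k)}) is equipotentially almost periodic, and f : ℝ → ℂ^q is bounded, locally integrable and satisfies (H3). Then the sequence h : ℤ → ℂ^q defined by h(n) = ∫_{t_n}^{t_{n+1}} X(t_{n+1}, u) f(u) du is an almost periodic sequence. -/
open scoped Matrix
open MeasureTheory Filter

attribute [local instance] Matrix.frobeniusSeminormedAddCommGroup
  Matrix.frobeniusNormedAddCommGroup Matrix.frobeniusNormedSpace
  Matrix.frobeniusNormedRing Matrix.frobeniusNormedAlgebra Matrix.frobeniusIsBoundedSMul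

noncomputable section

abbrev Mat (q : ℕ) := Matrix (Fin q) (Fin q) ℂ
abbrev Vec (q : ℕ) := EuclideanSpace ℂ (Fin q)

/-- Action of a `q × q` complex matrix on `ℂ^q` with the Euclidean norm. -/
def aMul {q : ℕ} (M : Mat q) (v : Vec q) : Vec q := Matrix.toEuclideanLin M v

/-- A set of reals is relatively dense. -/
def RelDenseR (E : Set ℝ) : Prop :=
  ∃ l : ℝ, 0 < l ∧ ∀ m : ℝ, (E ∩ Set.Icc m (m + l)).Nonempty

/-- A set of integers is relatively dense in `ℤ`. -/
def RelDenseZ (E : Set ℤ) : Prop :=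
  ∃ l : ℤ, 0 < l ∧ ∀ m : ℤ, (E ∩ Set.Icc m (m + l)).Nonempty

/-- Almost periodic (continuous) function on `ℝ`. -/
def APR {E : Type*} [NormedAddCommGroup E] (g : ℝ → E) : Prop :=
  Continuous g ∧ ∀ ε : ℝ, 0 < ε →
    RelDenseR {τ : ℝ | ∀ t : ℝ, ‖g (t + τ) - g t‖ ≤ ε}

/-- Almost periodic sequence on `ℤ`. -/
def APZ {E : Type*} [NormedAddCommGroup E] (x : ℤ → E) : Prop :=
  ∀ ε : ℝ, 0 < ε → RelDenseZ {τ : ℤ | ∀ n : ℤ, ‖x (n + τ) - x n‖ ≤ ε}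

/-- The family `t_n^{(k)} = t_{n+k} - t_n` is equipotentially almost periodic. -/
def EquiAP (ts : ℤ → ℝ) : Prop :=
  ∀ ε : ℝ, 0 < ε → RelDenseZ {T : ℤ | ∀ k n : ℤ,
    |(ts (T + n + k) - ts (T + n)) - (ts (n + k) - ts n)| ≤ ε}

/-- The `(H3)` translation set of a (possibly discontinuous) function `f`. -/
def Tset {E : Type*} [NormedAddCommGroup E] (ts : ℤ → ℝ) (f : ℝ → E) (ε : ℝ) : Set ℝ :=
  {τ : ℝ | ∀ s : ℝ, (∀ n : ℤ, s ∉ Set.Ioo (ts n - ε) (ts n + ε)) → ‖f (s + τ) - f s‖ ≤ ε}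

/-- Hypothesis `(H3)`: almost periodicity for piecewise continuous functions. -/
def H3cond {E : Type*} [NormedAddCommGroup E] (ts : ℤ → ℝ) (f : ℝ → E) : Prop :=
  ∀ ε : ℝ, 0 < ε → RelDenseR (Tset ts f ε) ∧
    ∃ δ : ℝ, 0 < δ ∧ ∀ τ' : ℝ, |τ'| ≤ δ → ∀ n : ℤ, ∀ s : ℝ,
      s ∈ Set.Icc (ts n) (ts (n + 1)) → s + τ' ∈ Set.Icc (ts n) (ts (n + 1)) →
      ‖f (s + τ') - f s‖ ≤ ε

/-!
A Bochner-type pigeonhole argument. Attach to every integer `m` a label recording its offset from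
an almost period of the family `t^{(k)}` and, rounded to a small scale, the positions of `t_m`
relative to almost periods of `A` and of `f`; the labels take finitely many values. If `m` and `a`
carry the same label, the grid, the coefficient and the forcing term seen from `t_m` and from `t_a`
are close, so Grönwall's inequality makes the Cauchy operators close and `(H3)` makes the forcing
terms close off a neighbourhood of the grid whose measure is small, because equipotential almost
periodicity bounds the number of grid points per window. Hence `h (n + m) ≈ h (n + a)` uniformly
in `n`, and subtracting from `m` a fixed representative of its label gives an almost period of
`h` at bounded distance from `m`.
-/

open Set Real

lemma gronwallBound_δ0_le {K ε x : ℝ} (hK : 0 ≤ K) (hε : 0 ≤ ε) :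
    gronwallBound 0 K ε x ≤ ε * x * exp (K * x) := by
  rcases hK.eq_or_lt with rfl | hK
  · simp [gronwallBound_K0]
  simp only [gronwallBound_of_K_ne_0 hK.ne', zero_mul, zero_add]
  rw [div_mul_eq_mul_div, div_le_iff₀ hK]
  have h : exp (K * x) * (1 - K * x) ≤ 1 := by
    calc exp (K * x) * (1 - K * x) ≤ exp (K * x) * exp (-(K * x)) := by
          gcongr; linarith [add_one_le_exp (-(K * x))]
      _ = 1 := by rw [← exp_add, add_neg_cancel, exp_zero]
  nlinarith

/-- The Cauchy operator `X(t, s) = X(t) X(s)⁻¹` of `x' = A(t) x`, axiomatized. -/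
structure IsPropagator {R : Type*} [NormedRing R] [NormedAlgebra ℝ R] (A : ℝ → R)
    (K : ℝ → ℝ → R) : Prop where
  self : ∀ t, K t t = 1
  mul : ∀ t s r, K t s * K s r = K t r
  hasDerivAt : ∀ t s, HasDerivAt (fun t => K t s) (A t * K t s) t

namespace IsPropagator

variable {R : Type*} [NormedRing R] [NormedAlgebra ℝ R] {A : ℝ → R} {K : ℝ → ℝ → R} {M : ℝ}

lemma comp_add (hK : IsPropagator A K) (c : ℝ) :
    IsPropagator (fun t => A (t + c)) (fun t s => K (t + c) (s + c)) where
  self t := hK.self _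
  mul t s r := hK.mul _ _ _
  hasDerivAt t s := by
    simpa using (hK.hasDerivAt (t + c) (s + c)).comp_add_const t c

lemma comp_neg (hK : IsPropagator A K) :
    IsPropagator (fun t => -A (-t)) (fun t s => K (-t) (-s)) where
  self t := hK.self _
  mul t s r := hK.mul _ _ _
  hasDerivAt t s := by
    simpa [Function.comp_def] using (hK.hasDerivAt (-t) (-s)).scomp t (hasDerivAt_neg' t)

lemma norm_le_of_le (hK : IsPropagator A K) (hM : ∀ t, ‖A t‖ ≤ M) {s t : ℝ} (hst : s ≤ t) :
    ‖K t s‖ ≤ ‖(1 : R)‖ * exp (M * (t - s)) := by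
  have := norm_le_gronwallBound_of_norm_deriv_right_le (f := fun t => K t s) (δ := ‖(1 : R)‖)
    (K := M) (ε := 0) (a := s) (b := t)
    (fun u _ => (hK.hasDerivAt u s).continuousAt.continuousWithinAt)
    (fun u _ => (hK.hasDerivAt u s).hasDerivWithinAt) (by rw [hK.self])
    (fun u _ => by simpa using norm_mul_le_of_le (hM u) le_rfl) t ⟨hst, le_rfl⟩
  rwa [gronwallBound_ε0] at this

lemma norm_le (hK : IsPropagator A K) (hM : ∀ t, ‖A t‖ ≤ M) (t s : ℝ) :
    ‖K t s‖ ≤ ‖(1 : R)‖ * exp (M * |t - s|) := by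
  rcases le_total s t with hst | hts
  · rw [abs_of_nonneg (sub_nonneg.2 hst)]
    exact hK.norm_le_of_le hM hst
  · have := hK.comp_neg.norm_le_of_le (fun t => (norm_neg (A (-t))).le.trans (hM _))
      (neg_le_neg hts)
    rw [abs_of_nonpos (sub_nonpos.2 hts), neg_sub]
    simpa [sub_eq_add_neg, add_comm] using this

lemma norm_le_of_mem_Icc (hK : IsPropagator A K) (hM : ∀ t, ‖A t‖ ≤ M) {a b t s : ℝ}
    (ht : t ∈ Icc a b) (hs : s ∈ Icc a b) :
    ‖K t s‖ ≤ ‖(1 : R)‖ * exp (M * (b - a)) := by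
  have hM0 : 0 ≤ M := (norm_nonneg _).trans (hM 0)
  refine (hK.norm_le hM t s).trans ?_
  gcongr
  exact abs_sub_le_of_le_of_le ht.1 ht.2 hs.1 hs.2

lemma norm_sub_le_left (hK : IsPropagator A K) (hM : ∀ t, ‖A t‖ ≤ M) {a b t t' s : ℝ}
    (ht : t ∈ Icc a b) (ht' : t' ∈ Icc a b) (hs : s ∈ Icc a b) :
    ‖K t s - K t' s‖ ≤ M * (‖(1 : R)‖ * exp (M * (b - a))) * |t - t'| := by
  rw [← Real.norm_eq_abs]
  refine (convex_Icc a b).norm_image_sub_le_of_norm_hasDerivWithin_le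
    (fun u _ => (hK.hasDerivAt u s).hasDerivWithinAt) (fun u hu => ?_) ht' ht
  exact norm_mul_le_of_le (hM u) (hK.norm_le_of_mem_Icc hM hu hs)

lemma norm_sub_le (hK : IsPropagator A K) (hM : ∀ t, ‖A t‖ ≤ M) {a b t t' s s' : ℝ}
    (ht : t ∈ Icc a b) (ht' : t' ∈ Icc a b) (hs : s ∈ Icc a b) (hs' : s' ∈ Icc a b) :
    ‖K t s - K t' s'‖ ≤ M * (‖(1 : R)‖ * exp (M * (b - a))) * |t - t'| +
      ‖(1 : R)‖ * exp (M * (b - a)) * (M * (‖(1 : R)‖ * exp (M * (b - a))) * |s' - s|) := by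
  have hsplit : K t s - K t' s' = (K t s - K t' s) + K t' s' * (K s' s - K s s) := by
    rw [mul_sub, hK.mul, hK.self, mul_one]; abel
  rw [hsplit]
  refine (norm_add_le _ _).trans (add_le_add (hK.norm_sub_le_left hM ht ht' hs) ?_)
  exact norm_mul_le_of_le (hK.norm_le_of_mem_Icc hM ht' hs') (hK.norm_sub_le_left hM hs' hs hs)

lemma norm_sub_le_of_norm_sub_le {A' : ℝ → R} {K' : ℝ → ℝ → R} {η : ℝ} (hK : IsPropagator A K)
    (hK' : IsPropagator A' K') (hM : ∀ t, ‖A t‖ ≤ M) (hM' : ∀ t, ‖A' t‖ ≤ M)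
    (hη : ∀ t, ‖A t - A' t‖ ≤ η) {s t : ℝ} (hst : s ≤ t) :
    ‖K t s - K' t s‖ ≤ η * (‖(1 : R)‖ * exp (M * (t - s))) * (t - s) * exp (M * (t - s)) := by
  have hM0 : 0 ≤ M := (norm_nonneg _).trans (hM 0)
  have hη0 : 0 ≤ η := (norm_nonneg _).trans (hη 0)
  set B := ‖(1 : R)‖ * exp (M * (t - s))
  have hderiv : ∀ u, HasDerivAt (fun u => K u s - K' u s)
      (A u * (K u s - K' u s) + (A u - A' u) * K' u s) u := fun u =>
    ((hK.hasDerivAt u s).sub (hK'.hasDerivAt u s)).congr_deriv (by noncomm_ring)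
  have := norm_le_gronwallBound_of_norm_deriv_right_le (δ := 0) (K := M) (ε := η * B)
    (a := s) (b := t) (fun u _ => (hderiv u).continuousAt.continuousWithinAt)
    (fun u _ => (hderiv u).hasDerivWithinAt) (by simp [hK.self, hK'.self])
    (fun u hu => ?_) t ⟨hst, le_rfl⟩
  · exact this.trans (gronwallBound_δ0_le hM0 (by positivity))
  refine (norm_add_le _ _).trans (add_le_add (norm_mul_le_of_le (hM u) le_rfl)
    (norm_mul_le_of_le (hη u) ?_))
  exact hK'.norm_le_of_mem_Icc hM' ⟨hu.1, hu.2.le⟩ ⟨le_rfl, hst⟩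

lemma continuous_right (hK : IsPropagator A K) (hM : ∀ t, ‖A t‖ ≤ M) (t : ℝ) :
    Continuous (K t) := by
  refine continuous_iff_continuousAt.2 fun s => continuousAt_of_locally_lipschitz one_pos
    (‖(1 : R)‖ * exp (M * (max t (s + 1) - min t (s - 1))) *
      (M * (‖(1 : R)‖ * exp (M * (max t (s + 1) - min t (s - 1)))))) fun s' hs' => ?_
  have mem : ∀ u, |u - s| ≤ 1 → u ∈ Icc (min t (s - 1)) (max t (s + 1)) := fun u hu => by
    rw [abs_le] at hu; constructor <;> [exact min_le_of_right_le (by linarith);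
      exact le_max_of_le_right (by linarith)]
  have ht : t ∈ Icc (min t (s - 1)) (max t (s + 1)) := ⟨min_le_left _ _, le_max_left _ _⟩
  rw [Real.dist_eq] at hs'
  have := hK.norm_sub_le hM ht ht (mem s' hs'.le) (mem s (by simp))
  rw [sub_self, abs_zero, mul_zero, zero_add, ← mul_assoc, abs_sub_comm] at this
  simpa [dist_eq_norm, Real.dist_eq] using this

lemma exists_norm_sub_shift_le (hK : IsPropagator A K) (hM : ∀ t, ‖A t‖ ≤ M) (L : ℝ) :
    ∃ C, 0 ≤ C ∧ ∀ c₁ c₂ η d x y x' y' : ℝ,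
      (∀ w, ‖A (w + c₁) - A (w + c₂)‖ ≤ η) → x ≤ y → y - x ≤ L → d ≤ 1 →
      |y - y'| ≤ d → |x - x'| ≤ d →
      ‖K (y + c₁) (x + c₁) - K (y' + c₂) (x' + c₂)‖ ≤ C * (η + d) := by
  have hM0 : 0 ≤ M := (norm_nonneg _).trans (hM 0)
  set L' := max L 0 + 2
  set B := ‖(1 : R)‖ * exp (M * L')
  have hE : ∀ r, r ≤ L' → ‖(1 : R)‖ * exp (M * r) ≤ B := fun r hr => by unfold B; gcongr
  refine ⟨B * L' * exp (M * L') + (M * B + B * (M * B)), by positivity,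
    fun c₁ c₂ η d x y x' y' hη hxy hyx hd1 hy hx => ?_⟩
  have hη0 : 0 ≤ η := (norm_nonneg _).trans (hη 0)
  have hd0 : 0 ≤ d := (abs_nonneg _).trans hx
  have hL : y - x ≤ L' := by linarith [le_max_left L 0]
  have hLd : d + (y - x) + d ≤ L' := by linarith [le_max_left L 0]
  have hx' := abs_le.1 hx
  have hy' := abs_le.1 hy
  have hK₂ := hK.comp_add c₂
  have hM₂ : ∀ t, ‖A (t + c₂)‖ ≤ M := fun t => hM _
  have hcoeff : ‖K (y + c₁) (x + c₁) - K (y + c₂) (x + c₂)‖ ≤ η * (B * L' * exp (M * L')) := by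
    refine ((hK.comp_add c₁).norm_sub_le_of_norm_sub_le hK₂ (fun t => hM _) hM₂ hη hxy).trans ?_
    have := hE _ hL
    calc _ ≤ η * B * L' * exp (M * L') := by gcongr
      _ = _ := by ring
  have hpts : ‖K (y + c₂) (x + c₂) - K (y' + c₂) (x' + c₂)‖ ≤ d * (M * B + B * (M * B)) := by
    refine (hK₂.norm_sub_le hM₂ (a := x - d) (b := x + (y - x) + d) ⟨by linarith, by linarith⟩
      ⟨by linarith, by linarith⟩ ⟨by linarith, by linarith⟩ ⟨by linarith, by linarith⟩).trans ?_
    rw [abs_sub_comm x', show x + (y - x) + d - (x - d) = d + (y - x) + d by ring]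
    have := hE _ hLd
    calc _ ≤ M * B * d + B * (M * B * d) := by gcongr
      _ = _ := by ring
  have hC₁ : 0 ≤ B * L' * exp (M * L') := by positivity
  have hC₂ : 0 ≤ M * B + B * (M * B) := by positivity
  calc _ ≤ _ := norm_sub_le_norm_sub_add_norm_sub _ (K (y + c₂) (x + c₂)) _
    _ ≤ η * (B * L' * exp (M * L')) + d * (M * B + B * (M * B)) := add_le_add hcoeff hpts
    _ ≤ _ := by nlinarith [mul_nonneg hη0 hC₂, mul_nonneg hd0 hC₁]

end IsPropagator

lemma isPropagator_mul_inv {q : ℕ} {A X : ℝ → Mat q} (hX : ∀ t, HasDerivAt X (A t * X t) t)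
    (hXinv : ∀ t, IsUnit (X t)) : IsPropagator A (fun t s => X t * (X s)⁻¹) where
  self t := Matrix.mul_nonsing_inv _ ((Matrix.isUnit_iff_isUnit_det _).1 (hXinv t))
  mul t s r := by
    rw [mul_assoc, ← mul_assoc (X s)⁻¹,
      Matrix.nonsing_inv_mul _ ((Matrix.isUnit_iff_isUnit_det _).1 (hXinv s)), one_mul]
  hasDerivAt t s := by simpa only [mul_assoc] using (hX t).mul_const (X s)⁻¹

lemma norm_aMul_le {q : ℕ} (M : Mat q) (v : Vec q) : ‖aMul M v‖ ≤ ‖M‖ * ‖v‖ := by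
  have hMv := Matrix.frobenius_norm_replicateCol (ι := Fin 1) (M *ᵥ WithLp.ofLp v)
  have hv := Matrix.frobenius_norm_replicateCol (ι := Fin 1) (WithLp.ofLp v)
  rw [Matrix.replicateCol_mulVec] at hMv
  calc ‖aMul M v‖ = ‖M * Matrix.replicateCol (Fin 1) (WithLp.ofLp v)‖ := hMv.symm
    _ ≤ ‖M‖ * ‖Matrix.replicateCol (Fin 1) (WithLp.ofLp v)‖ := Matrix.frobenius_norm_mul _ _
    _ = ‖M‖ * ‖v‖ := congrArg (‖M‖ * ·) hv

lemma aMul_sub_aMul {q : ℕ} (M N : Mat q) (v w : Vec q) :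
    aMul M v - aMul N w = aMul (M - N) v + aMul N (v - w) := by
  simp only [aMul, map_sub, LinearMap.sub_apply]; abel

lemma norm_aMul_sub_aMul_le {q : ℕ} (M N : Mat q) (v w : Vec q) :
    ‖aMul M v - aMul N w‖ ≤ ‖M - N‖ * ‖v‖ + ‖N‖ * ‖v - w‖ := by
  rw [aMul_sub_aMul]
  exact norm_add_le_of_le (norm_aMul_le _ _) (norm_aMul_le _ _)

lemma continuous_aMul (q : ℕ) : Continuous fun p : Mat q × Vec q => aMul p.1 p.2 := by
  show Continuous fun p : Mat q × Vec q => WithLp.toLp 2 (p.1 *ᵥ WithLp.ofLp p.2)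
  fun_prop

lemma intervalIntegrable_aMul {q : ℕ} {Φ : ℝ → Mat q} {f : ℝ → Vec q} (hΦ : Continuous Φ)
    (hf : LocallyIntegrable f) (a b : ℝ) :
    IntervalIntegrable (fun u => aMul (Φ u) (f u)) volume a b := by
  obtain ⟨C, hC⟩ := (isCompact_uIcc (a := a) (b := b)).exists_bound_of_continuousOn hΦ.continuousOn
  have hfi : IntegrableOn f (uIoc a b) :=
    (hf.integrableOn_isCompact isCompact_uIcc).mono_set uIoc_subset_uIcc
  -- the Frobenius norm and the product topology on matrices agree, but only up to unfolding
  have hΦm : AEStronglyMeasurable Φ (volume.restrict (uIoc a b)) :=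
    (show @Continuous _ _ _ (@UniformSpace.toTopologicalSpace _ PseudoMetricSpace.toUniformSpace) Φ
      from hΦ).aestronglyMeasurable
  have hm := (continuous_aMul q).comp_aestronglyMeasurable (hΦm.prodMk hfi.aestronglyMeasurable)
  rw [intervalIntegrable_iff]
  refine (hfi.norm.const_mul C).mono' hm ?_
  filter_upwards [ae_restrict_mem measurableSet_uIoc] with u hu
  show ‖aMul (Φ u) (f u)‖ ≤ C * ‖f u‖
  exact (norm_aMul_le _ _).trans (mul_le_mul_of_nonneg_right (hC u (uIoc_subset_uIcc hu))
    (norm_nonneg _))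

lemma norm_intervalIntegral_le_of_norm_le_off {E : Type*} [NormedAddCommGroup E] [NormedSpace ℝ E]
    {F : ℝ → E} {a b α β V : ℝ} {S : Set ℝ} (hS : MeasurableSet S) (hV : 0 ≤ V)
    (hSV : volume S ≤ ENNReal.ofReal V) (hab : a ≤ b) (hβ : 0 ≤ β)
    (hgood : ∀ v ∈ Ioc a b, v ∉ S → ‖F v‖ ≤ α) (hbad : ∀ v ∈ Ioc a b, ‖F v‖ ≤ α + β) :
    ‖∫ v in a..b, F v‖ ≤ α * (b - a) + β * V := by
  have hconst : IntegrableOn (fun _ => α) (Ioc a b) := integrableOn_const measure_Ioc_lt_top.ne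
  have hind : IntegrableOn (S.indicator fun _ => β) (Ioc a b) :=
    (integrableOn_const measure_Ioc_lt_top.ne).indicator hS
  rw [intervalIntegral.integral_of_le hab]
  refine (norm_integral_le_of_norm_le (hconst.add hind)
    ((ae_restrict_iff' measurableSet_Ioc).2 (Eventually.of_forall fun v hv => ?_))).trans ?_
  · by_cases hvS : v ∈ S
    · simpa [hvS] using hbad v hv
    · simpa [hvS] using hgood v hv hvS
  rw [Pi.add_def, integral_add hconst hind, setIntegral_const, integral_indicator_const _ hS,
    Real.volume_real_Ioc_of_le hab, smul_eq_mul, smul_eq_mul, mul_comm (b - a), mul_comm _ β]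
  have hvol : (volume.restrict (Ioc a b)).real S ≤ V := by
    rw [measureReal_restrict_apply hS]
    exact ENNReal.toReal_le_of_le_ofReal hV ((measure_mono inter_subset_left).trans hSV)
  gcongr

lemma norm_intervalIntegral_le_of_norm_le {E : Type*} [NormedAddCommGroup E] [NormedSpace ℝ E]
    {F : ℝ → E} {a b C : ℝ} (hab : a ≤ b) (hF : ∀ v ∈ Ioc a b, ‖F v‖ ≤ C) :
    ‖∫ v in a..b, F v‖ ≤ C * (b - a) := by
  refine (intervalIntegral.norm_integral_le_of_norm_le_const fun v hv => ?_).trans_eq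
    (by rw [abs_of_nonneg (sub_nonneg.2 hab)])
  exact hF v (by rwa [uIoc_of_le hab] at hv)

lemma norm_intervalIntegral_sub_le {E : Type*} [NormedAddCommGroup E] [NormedSpace ℝ E]
    {F₁ F₂ : ℝ → E} {g₁ g₂ C α V : ℝ} {S : Set ℝ} (hS : MeasurableSet S) (hV : 0 ≤ V)
    (hSV : volume S ≤ ENNReal.ofReal V) (hg₁ : 0 ≤ g₁) (hg₂ : 0 ≤ g₂) (hα : 0 ≤ α) (hC : 0 ≤ C)
    (h₁ : IntervalIntegrable F₁ volume 0 g₁) (h₂ : IntervalIntegrable F₂ volume 0 g₂)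
    (hF₁ : ∀ v ∈ Ioc 0 g₁, ‖F₁ v‖ ≤ C) (hF₂ : ∀ v ∈ Ioc 0 g₂, ‖F₂ v‖ ≤ C)
    (hgood : ∀ v ∈ Ioc 0 (min g₁ g₂), v ∉ S → ‖F₁ v - F₂ v‖ ≤ α) :
    ‖(∫ v in 0..g₁, F₁ v) - ∫ v in 0..g₂, F₂ v‖ ≤
      α * min g₁ g₂ + 2 * C * V + C * |g₁ - g₂| := by
  set G := min g₁ g₂
  have hG : 0 ≤ G := le_min hg₁ hg₂
  have hG₁ : G ≤ g₁ := min_le_left _ _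
  have hG₂ : G ≤ g₂ := min_le_right _ _
  have h₁G : IntervalIntegrable F₁ volume 0 G := h₁.mono_set <| by
    rw [uIcc_of_le hG, uIcc_of_le hg₁]; exact Icc_subset_Icc le_rfl hG₁
  have h₂G : IntervalIntegrable F₂ volume 0 G := h₂.mono_set <| by
    rw [uIcc_of_le hG, uIcc_of_le hg₂]; exact Icc_subset_Icc le_rfl hG₂
  have hsplit : (∫ v in 0..g₁, F₁ v) - ∫ v in 0..g₂, F₂ v = (∫ v in 0..G, F₁ v - F₂ v) +
      (∫ v in G..g₁, F₁ v) - ∫ v in G..g₂, F₂ v := by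
    rw [intervalIntegral.integral_sub h₁G h₂G, ← intervalIntegral.integral_interval_sub_left h₁ h₁G,
      ← intervalIntegral.integral_interval_sub_left h₂ h₂G]
    abel
  have hbad : ∀ v ∈ Ioc 0 G, ‖F₁ v - F₂ v‖ ≤ α + 2 * C := fun v hv => by
    linarith [norm_sub_le (F₁ v) (F₂ v), hF₁ v (Ioc_subset_Ioc_right hG₁ hv),
      hF₂ v (Ioc_subset_Ioc_right hG₂ hv)]
  have hmain := norm_intervalIntegral_le_of_norm_le_off hS hV hSV hG (by positivity) hgood hbad
  have htail₁ := norm_intervalIntegral_le_of_norm_le hG₁ fun v hv =>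
    hF₁ v (Ioc_subset_Ioc_left hG hv)
  have htail₂ := norm_intervalIntegral_le_of_norm_le hG₂ fun v hv =>
    hF₂ v (Ioc_subset_Ioc_left hG hv)
  have hgap : (g₁ - G) + (g₂ - G) = |g₁ - g₂| := by
    rcases le_total g₁ g₂ with h | h
    · rw [show G = g₁ from min_eq_left h, abs_of_nonpos (sub_nonpos.2 h)]; ring
    · rw [show G = g₂ from min_eq_right h, abs_of_nonneg (sub_nonneg.2 h)]; ring
  rw [hsplit]
  have := norm_add_le (∫ v in 0..G, F₁ v - F₂ v) (∫ v in G..g₁, F₁ v)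
  refine (norm_sub_le _ _).trans ?_
  nlinarith

lemma RelDenseR.exists_sub_mem_Icc {E : Set ℝ} (h : RelDenseR E) :
    ∃ l, ∀ x, ∃ τ ∈ E, x - τ ∈ Icc 0 l := by
  obtain ⟨l, -, hl⟩ := h
  refine ⟨l, fun x => ?_⟩
  obtain ⟨τ, hτ, hτx⟩ := hl (x - l)
  exact ⟨τ, hτ, by constructor <;> linarith [hτx.1, hτx.2]⟩

lemma RelDenseZ.exists_sub_mem_Icc {E : Set ℤ} (h : RelDenseZ E) :
    ∃ l, ∀ m, ∃ T ∈ E, m - T ∈ Icc 0 l := by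
  obtain ⟨l, -, hl⟩ := h
  refine ⟨l, fun m => ?_⟩
  obtain ⟨T, hT, hTm⟩ := hl (m - l)
  exact ⟨T, hT, by constructor <;> linarith [hTm.1, hTm.2]⟩

lemma relDenseZ_of_finite_range {ι : Type*} {E : Set ℤ} (cl : ℤ → ι) (hcl : (range cl).Finite)
    (hE : ∀ m a, cl m = cl a → m - a ∈ E) : RelDenseZ E := by
  choose rep hrep using fun i : range cl => i.2
  have : Finite (range cl) := hcl
  obtain ⟨L, hL⟩ := (finite_range fun i => |rep i|).bddAbove
  have hrepL : ∀ m, |rep ⟨cl m, m, rfl⟩| ≤ L := fun m => hL ⟨_, rfl⟩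
  refine ⟨2 * L + 1, by linarith [(abs_nonneg _).trans (hrepL 0)], fun m₀ => ?_⟩
  set m := m₀ + L + 1
  refine ⟨m - rep ⟨cl m, m, rfl⟩, hE _ _ (hrep ⟨cl m, m, rfl⟩).symm, ?_⟩
  have := abs_le.1 (hrepL m)
  constructor <;> omega

lemma APZ.of_finite_range {E ι : Type*} [NormedAddCommGroup E] {x : ℤ → E}
    (h : ∀ ε > 0, ∃ cl : ℤ → ι, (range cl).Finite ∧
      ∀ m a, cl m = cl a → ∀ n, ‖x (n + m) - x (n + a)‖ ≤ ε) : APZ x := fun ε hε => by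
  obtain ⟨cl, hcl, hx⟩ := h ε hε
  refine relDenseZ_of_finite_range cl hcl fun m a hma n => ?_
  simpa only [sub_add_cancel, sub_add_eq_add_sub, add_sub_assoc] using hx m a hma (n - a)

lemma APR.exists_norm_le {E : Type*} [NormedAddCommGroup E] {g : ℝ → E} (hg : APR g) :
    ∃ C, ∀ t, ‖g t‖ ≤ C := by
  obtain ⟨l, hl⟩ := (hg.2 1 one_pos).exists_sub_mem_Icc
  obtain ⟨C, hC⟩ := isCompact_Icc.exists_bound_of_continuousOn (hg.1.continuousOn (s := Icc 0 l))
  refine ⟨C + 1, fun t => ?_⟩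
  obtain ⟨τ, hτ, htτ⟩ := hl t
  have := hτ (t - τ)
  rw [sub_add_cancel] at this
  calc ‖g t‖ ≤ ‖g (t - τ)‖ + ‖g t - g (t - τ)‖ := norm_le_insert' _ _
    _ ≤ C + 1 := add_le_add (hC _ htτ) this

lemma APR.uniformContinuous {E : Type*} [NormedAddCommGroup E] {g : ℝ → E} (hg : APR g) :
    UniformContinuous g := by
  refine Metric.uniformContinuous_iff_le.2 fun ε hε => ?_
  obtain ⟨l, hl⟩ := (hg.2 (ε / 3) (by positivity)).exists_sub_mem_Icc
  obtain ⟨δ, hδ, hgδ⟩ := Metric.uniformContinuousOn_iff_le.1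
    (isCompact_Icc.uniformContinuousOn_of_continuous (hg.1.continuousOn (s := Icc (-1) (l + 1))))
    (ε / 3) (by positivity)
  refine ⟨min δ 1, by positivity, fun a b hab => ?_⟩
  obtain ⟨τ, hτ, haτ⟩ := hl a
  rw [Real.dist_eq] at hab
  have hab' := abs_le.1 (hab.trans (min_le_right _ _))
  have hmid := hgδ (a - τ) ⟨by linarith [haτ.1], by linarith [haτ.2]⟩ (b - τ)
    ⟨by linarith [haτ.1], by linarith [haτ.2]⟩ (by
      rw [Real.dist_eq, sub_sub_sub_cancel_right]; exact hab.trans (min_le_left _ _))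
  have ha := hτ (a - τ)
  have hb := hτ (b - τ)
  rw [sub_add_cancel] at ha hb
  rw [dist_eq_norm] at hmid ⊢
  calc ‖g a - g b‖ = ‖(g a - g (a - τ)) + (g (a - τ) - g (b - τ)) - (g b - g (b - τ))‖ := by
        congr 1; abel
    _ ≤ ε / 3 + ε / 3 + ε / 3 := norm_sub_le_of_le (norm_add_le_of_le ha hmid) hb
    _ = ε := by ring

section Grid

variable {ts : ℤ → ℝ}

lemma exists_le_lt_succ (htop : Tendsto ts atTop atTop)
    (hbot : Tendsto ts atBot atBot) (x : ℝ) : ∃ k, ts k ≤ x ∧ x < ts (k + 1) := by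
  obtain ⟨b, hb⟩ := (htop.eventually (eventually_gt_atTop x)).exists_forall_of_atTop
  obtain ⟨k, hk, hmax⟩ := Int.exists_greatest_of_bdd
    ⟨b, fun z hz => not_lt.1 fun hbz => (hb z hbz.le).not_ge hz⟩
    (hbot.eventually (eventually_le_atBot x)).exists
  exact ⟨k, hk, not_le.1 fun h => by linarith [hmax _ h]⟩

def WindowBounded (ts : ℤ → ℝ) (L : ℝ) (N : ℕ) : Prop :=
  ∀ x, ∃ k₀ : ℤ, ∀ k, ts k ∈ Icc x (x + L) → k ∈ Icc k₀ (k₀ + N)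

/-- Compare `t_{m+N} - t_m` with `t_{s+N} - t_s`, where `s = m - T ∈ [0, l]` for an almost
period `T` of the family `t^{(k)}`. -/
lemma EquiAP.exists_lt_sub (hts : StrictMono ts) (htop : Tendsto ts atTop atTop)
    (hequi : EquiAP ts) (L : ℝ) : ∃ N : ℕ, ∀ m, L < ts (m + N) - ts m := by
  obtain ⟨l, hl⟩ := RelDenseZ.exists_sub_mem_Icc (hequi 1 one_pos)
  obtain ⟨K, hK⟩ := (htop.eventually (eventually_gt_atTop (ts l + L + 1))).exists_forall_of_atTop
  refine ⟨K.toNat, fun m => ?_⟩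
  obtain ⟨T, hT, hmT⟩ := hl m
  have h := abs_le.1 (hT K.toNat (m - T))
  rw [add_sub_cancel] at h
  have h₁ : ts K.toNat ≤ ts (m - T + K.toNat) := hts.monotone (by linarith [hmT.1])
  have h₂ : ts (m - T) ≤ ts l := hts.monotone hmT.2
  linarith [hK K.toNat (by omega)]

lemma EquiAP.exists_windowBounded (hts : StrictMono ts) (htop : Tendsto ts atTop atTop)
    (hbot : Tendsto ts atBot atBot) (hequi : EquiAP ts) (L : ℝ) :
    ∃ N, WindowBounded ts L N := by
  obtain ⟨N, hN⟩ := hequi.exists_lt_sub hts htop L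
  refine ⟨N, fun x => ?_⟩
  obtain ⟨k₀, hk₀, hxk₀⟩ := exists_le_lt_succ htop hbot x
  refine ⟨k₀, fun k hk => ⟨?_, ?_⟩⟩
  · by_contra! h
    linarith [hts h, hk.1]
  · by_contra! h
    linarith [hN (k₀ + 1), hts.monotone (show k₀ + 1 + N ≤ k by omega), hk.2]

lemma volume_iUnion_Icc_inter_le {L ℓ r c : ℝ} {N : ℕ} (hwin : WindowBounded ts L N)
    (hℓ : ℓ + 2 * r ≤ L) :
    volume ((⋃ k, Icc (ts k - c - r) (ts k - c + r)) ∩ Icc 0 ℓ) ≤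
      ENNReal.ofReal ((N + 1) * (2 * r)) := by
  obtain ⟨k₀, hk₀⟩ := hwin (c - r)
  have hsub : (⋃ k, Icc (ts k - c - r) (ts k - c + r)) ∩ Icc 0 ℓ ⊆
      ⋃ k ∈ Finset.Icc k₀ (k₀ + N), Icc (ts k - c - r) (ts k - c + r) := by
    rintro v ⟨hv, hvℓ⟩
    obtain ⟨k, hk⟩ := mem_iUnion.1 hv
    exact mem_biUnion (Finset.mem_Icc.2 (hk₀ k ⟨by linarith [hk.2, hvℓ.1],
      by linarith [hk.1, hvℓ.2]⟩)) hk
  refine (measure_mono hsub).trans ((measure_biUnion_finset_le _ _).trans ?_)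
  have hlen : ∀ k, ts k - c + r - (ts k - c - r) = 2 * r := fun k => by ring
  simp only [Real.volume_Icc, hlen, Finset.sum_const, Int.card_Icc, nsmul_eq_mul]
  rw [show (k₀ + N + 1 - k₀).toNat = N + 1 by omega, ← ENNReal.ofReal_natCast,
    ← ENNReal.ofReal_mul (by positivity)]
  push_cast; rfl

lemma lt_abs_of_notMem_iUnion_Icc_inter {v c r ℓ : ℝ} (hv : v ∈ Icc 0 ℓ)
    (hvS : v ∉ (⋃ k, Icc (ts k - c - r) (ts k - c + r)) ∩ Icc 0 ℓ) (k : ℤ) :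
    r < |v + c - ts k| := by
  by_contra! h
  rw [abs_le] at h
  exact hvS ⟨mem_iUnion.2 ⟨k, by constructor <;> linarith⟩, hv⟩

end Grid

/-- Two points whose `Tset`-translates are `d`-close and stay away from the grid: the first
part of `(H3)` moves each point to its translate, the second part bridges the two translates,
which lie in the same interval `[t_k, t_{k+1}]`. -/
lemma norm_sub_le_of_mem_Tset {E : Type*} [NormedAddCommGroup E] {ts : ℤ → ℝ} {f : ℝ → E}
    {σ d η τ₁ τ₂ x₁ x₂ : ℝ} (htop : Tendsto ts atTop atTop) (hbot : Tendsto ts atBot atBot)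
    (hσ : 0 ≤ σ) (hτ₁ : τ₁ ∈ Tset ts f σ) (hτ₂ : τ₂ ∈ Tset ts f σ)
    (hδ : ∀ τ', |τ'| ≤ d → ∀ k s, s ∈ Icc (ts k) (ts (k + 1)) →
      s + τ' ∈ Icc (ts k) (ts (k + 1)) → ‖f (s + τ') - f s‖ ≤ η)
    (hx : |(x₁ - τ₁) - (x₂ - τ₂)| ≤ d) (hfar : ∀ k, σ + d < |x₂ - τ₂ - ts k|) :
    ‖f x₁ - f x₂‖ ≤ 2 * σ + η := by
  have hd : 0 ≤ d := (abs_nonneg _).trans hx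
  have hx' := abs_le.1 hx
  have hfar₁ : ∀ k, x₁ - τ₁ ∉ Ioo (ts k - σ) (ts k + σ) := fun k hk => by
    have := hfar k
    rw [lt_abs] at this
    rcases this with h | h <;> linarith [hk.1, hk.2]
  have hfar₂ : ∀ k, x₂ - τ₂ ∉ Ioo (ts k - σ) (ts k + σ) := fun k hk => by
    have := hfar k
    rw [lt_abs] at this
    rcases this with h | h <;> linarith [hk.1, hk.2]
  have h₁ := hτ₁ _ hfar₁
  have h₂ := hτ₂ _ hfar₂
  rw [sub_add_cancel] at h₁ h₂
  obtain ⟨k, hk, hk1⟩ := exists_le_lt_succ htop hbot (x₂ - τ₂)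
  have hlo := hfar k
  have hhi := hfar (k + 1)
  rw [abs_of_nonneg (sub_nonneg.2 hk)] at hlo
  rw [abs_of_neg (sub_neg.2 hk1)] at hhi
  have hmid := hδ _ hx k (x₂ - τ₂) ⟨hk, hk1.le⟩ (by rw [add_sub_cancel]; constructor <;> linarith)
  rw [add_sub_cancel] at hmid
  calc ‖f x₁ - f x₂‖ = ‖(f x₁ - f (x₁ - τ₁)) + (f (x₁ - τ₁) - f (x₂ - τ₂))
        - (f x₂ - f (x₂ - τ₂))‖ := by congr 1; abel
    _ ≤ σ + η + σ := norm_sub_le_of_le (norm_add_le_of_le h₁ hmid) h₂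
    _ = 2 * σ + η := by ring

/-- `forcing` makes `f (· + t_m)` and `f (· + t_a)` both close, off the grid, to translates of `f`
by nearby amounts. -/
structure ShiftClose {q : ℕ} (ts : ℤ → ℝ) (A : ℝ → Mat q) (f : ℝ → Vec q) (σ η : ℝ) (m a : ℤ) :
    Prop where
  grid : ∀ k, |(ts (k + m) - ts m) - (ts (k + a) - ts a)| ≤ 2 * σ
  coeff : ∀ w, ‖A (w + ts m) - A (w + ts a)‖ ≤ η
  forcing : ∃ τ₁ ∈ Tset ts f σ, ∃ τ₂ ∈ Tset ts f σ, |(ts m - τ₁) - (ts a - τ₂)| ≤ σ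

section ShiftClose

variable {q : ℕ} {ts : ℤ → ℝ} {A : ℝ → Mat q} {f : ℝ → Vec q} {σ η : ℝ} {m a : ℤ}

lemma ShiftClose.mono {η' : ℝ} (h : ShiftClose ts A f σ η m a) (hη : η ≤ η') : ShiftClose ts A f σ η' m a :=
  ⟨h.grid, fun w => (h.coeff w).trans hη, h.forcing⟩

lemma ShiftClose.grid_succ (h : ShiftClose ts A f σ η m a) (n : ℤ) :
    |(ts (n + m + 1) - ts m) - (ts (n + a + 1) - ts a)| ≤ 2 * σ := by
  simpa only [add_right_comm n 1] using h.grid (n + 1)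

lemma ShiftClose.abs_sub_sub_le (h : ShiftClose ts A f σ η m a) (n : ℤ) :
    |(ts (n + m + 1) - ts (n + m)) - (ts (n + a + 1) - ts (n + a))| ≤ 4 * σ := by
  have h₀ := abs_le.1 (h.grid n)
  have h₁ := abs_le.1 (h.grid_succ n)
  rw [abs_le]; constructor <;> linarith

lemma ShiftClose.norm_sub_le {η' τ₁ τ₂ v : ℝ} (htop : Tendsto ts atTop atTop)
    (hbot : Tendsto ts atBot atBot) (hσ : 0 ≤ σ) (h : ShiftClose ts A f σ η' m a)
    (hδ : ∀ τ', |τ'| ≤ 3 * σ → ∀ k s, s ∈ Icc (ts k) (ts (k + 1)) →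
      s + τ' ∈ Icc (ts k) (ts (k + 1)) → ‖f (s + τ') - f s‖ ≤ η)
    (hτ₁ : τ₁ ∈ Tset ts f σ) (hτ₂ : τ₂ ∈ Tset ts f σ) (hτ : |(ts m - τ₁) - (ts a - τ₂)| ≤ σ)
    (n : ℤ) (hfar : ∀ k, 4 * σ < |v + (ts (n + a) - τ₂) - ts k|) :
    ‖f (ts (n + m) + v) - f (ts (n + a) + v)‖ ≤ 2 * σ + η := by
  have hg := abs_le.1 (h.grid n)
  have hτ' := abs_le.1 hτ
  refine norm_sub_le_of_mem_Tset htop hbot hσ hτ₁ hτ₂ hδ (abs_le.2 ⟨?_, ?_⟩) fun k => ?_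
  · linarith
  · linarith
  · rw [show ts (n + a) + v - τ₂ - ts k = v + (ts (n + a) - τ₂) - ts k by ring]
    linarith [hfar k]

end ShiftClose

lemma abs_sub_lt_of_floor_div_eq {x y δ : ℝ} (hδ : 0 < δ) (h : ⌊x / δ⌋ = ⌊y / δ⌋) :
    |x - y| < δ := by
  have := Int.abs_sub_lt_one_of_floor_eq_floor h
  rwa [← sub_div, abs_div, abs_of_pos hδ, div_lt_one hδ] at this

lemma norm_sub_le_of_almost_periods {E : Type*} [NormedAddCommGroup E] {g : ℝ → E}
    {σ δ η τ₁ τ₂ c₁ c₂ : ℝ} (hτ₁ : ∀ t, ‖g (t + τ₁) - g t‖ ≤ σ)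
    (hτ₂ : ∀ t, ‖g (t + τ₂) - g t‖ ≤ σ) (hg : ∀ s s', |s - s'| ≤ δ → ‖g s - g s'‖ ≤ η)
    (hc : |(c₁ - τ₁) - (c₂ - τ₂)| ≤ δ) (w : ℝ) :
    ‖g (w + c₁) - g (w + c₂)‖ ≤ 2 * σ + η := by
  have h₁ := hτ₁ (w + c₁ - τ₁)
  have h₂ := hτ₂ (w + c₂ - τ₂)
  have hmid := hg (w + c₁ - τ₁) (w + c₂ - τ₂) (by
    rwa [show w + c₁ - τ₁ - (w + c₂ - τ₂) = (c₁ - τ₁) - (c₂ - τ₂) by ring])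
  rw [sub_add_cancel] at h₁ h₂
  calc ‖g (w + c₁) - g (w + c₂)‖ = ‖(g (w + c₁) - g (w + c₁ - τ₁))
        + (g (w + c₁ - τ₁) - g (w + c₂ - τ₂)) - (g (w + c₂) - g (w + c₂ - τ₂))‖ := by
        congr 1; abel
    _ ≤ σ + η + σ := norm_sub_le_of_le (norm_add_le_of_le h₁ hmid) h₂
    _ = 2 * σ + η := by ring

/-- Every `m` is labelled by its offset from an almost period of `t^{(k)}` and by the positions,
rounded to the scales `δ` and `σ`, of `t_m` relative to almost periods of `A` and of `f`. -/
lemma exists_finite_range_shiftClose {q : ℕ} {ts : ℤ → ℝ} {A : ℝ → Mat q} {f : ℝ → Vec q}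
    {σ δ η : ℝ} (hequi : EquiAP ts) (hA : APR A) (hf : RelDenseR (Tset ts f σ)) (hσ : 0 < σ)
    (hδ : 0 < δ) (hAδ : ∀ s s', |s - s'| ≤ δ → ‖A s - A s'‖ ≤ η) :
    ∃ cl : ℤ → ℤ × ℤ × ℤ, (range cl).Finite ∧
      ∀ m a, cl m = cl a → ShiftClose ts A f σ (2 * σ + η) m a := by
  obtain ⟨lT, hT⟩ := RelDenseZ.exists_sub_mem_Icc (hequi σ hσ)
  obtain ⟨lA, hτA⟩ := (hA.2 σ hσ).exists_sub_mem_Icc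
  obtain ⟨lf, hτf⟩ := hf.exists_sub_mem_Icc
  choose T hT hmT using hT
  choose τA hτA hmτA using fun m => hτA (ts m)
  choose τf hτf hmτf using fun m => hτf (ts m)
  refine ⟨fun m => (m - T m, ⌊(ts m - τA m) / δ⌋, ⌊(ts m - τf m) / σ⌋), ?_, ?_⟩
  · refine ((finite_Icc 0 lT).prod ((finite_Icc 0 ⌊lA / δ⌋).prod (finite_Icc 0 ⌊lf / σ⌋))).subset ?_
    rintro _ ⟨m, rfl⟩
    refine ⟨hmT m, ⟨?_, ?_⟩, ⟨?_, ?_⟩⟩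
    · exact Int.floor_nonneg.2 (div_nonneg (hmτA m).1 hδ.le)
    · exact Int.floor_le_floor (div_le_div_of_nonneg_right (hmτA m).2 hδ.le)
    · exact Int.floor_nonneg.2 (div_nonneg (hmτf m).1 hσ.le)
    · exact Int.floor_le_floor (div_le_div_of_nonneg_right (hmτf m).2 hσ.le)
  intro m a hma
  simp only [Prod.mk.injEq] at hma
  obtain ⟨hs, hA', hf'⟩ := hma
  refine ⟨fun k => ?_, fun w => ?_, ⟨τf m, hτf m, τf a, hτf a,
    (abs_sub_lt_of_floor_div_eq hσ hf').le⟩⟩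
  · have hm := hT m k (m - T m)
    have ha := hT a k (a - T a)
    rw [add_sub_cancel, hs] at hm
    rw [add_sub_cancel] at ha
    rw [add_comm k m, add_comm k a]
    rw [abs_le] at hm ha ⊢
    constructor <;> linarith [hm.1, hm.2, ha.1, ha.2]
  · exact norm_sub_le_of_almost_periods (hτA m) (hτA a) hAδ
      (abs_sub_lt_of_floor_div_eq hδ hA').le w

section Cell

variable {q : ℕ} {ts : ℤ → ℝ} {A : ℝ → Mat q} {K : ℝ → ℝ → Mat q} {f : ℝ → Vec q} {M θ Cf : ℝ}

/-- The sequence `h` of the theorem, for a general propagator `K`. -/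
def cellIntegral (ts : ℤ → ℝ) (K : ℝ → ℝ → Mat q) (f : ℝ → Vec q) (n : ℤ) : Vec q :=
  ∫ u in ts n..ts (n + 1), aMul (K (ts (n + 1)) u) (f u)

lemma cellIntegral_eq_integral_comp_add (ts : ℤ → ℝ) (K : ℝ → ℝ → Mat q) (f : ℝ → Vec q)
    (n : ℤ) : cellIntegral ts K f n =
      ∫ v in 0..ts (n + 1) - ts n, aMul (K (ts (n + 1)) (ts n + v)) (f (ts n + v)) := by
  rw [intervalIntegral.integral_comp_add_left (fun u => aMul (K (ts (n + 1)) u) (f u)), add_zero,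
    add_sub_cancel, cellIntegral]

lemma intervalIntegrable_cellIntegrand (hK : IsPropagator A K) (hM : ∀ t, ‖A t‖ ≤ M)
    (hf : LocallyIntegrable f) (n : ℤ) :
    IntervalIntegrable (fun v => aMul (K (ts (n + 1)) (ts n + v)) (f (ts n + v))) volume 0
      (ts (n + 1) - ts n) := by
  simpa using (intervalIntegrable_aMul (hK.continuous_right hM (ts (n + 1))) hf (ts n)
    (ts (n + 1))).comp_add_left (ts n)

lemma norm_cellKernel_le (hK : IsPropagator A K) (hM : ∀ t, ‖A t‖ ≤ M)
    (hθ : ∀ n, ts (n + 1) - ts n ≤ θ) (n : ℤ) {v : ℝ} (hv : v ∈ Icc 0 (ts (n + 1) - ts n)) :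
    ‖K (ts (n + 1)) (ts n + v)‖ ≤ ‖(1 : Mat q)‖ * exp (M * θ) := by
  have hM0 : 0 ≤ M := (norm_nonneg _).trans (hM 0)
  refine (hK.norm_le hM _ _).trans ?_
  rw [abs_of_nonneg (by linarith [hv.2])]
  gcongr
  linarith [hv.1, hθ n]

lemma norm_cellIntegrand_le (hK : IsPropagator A K) (hM : ∀ t, ‖A t‖ ≤ M)
    (hCf : ∀ t, ‖f t‖ ≤ Cf) (hθ : ∀ n, ts (n + 1) - ts n ≤ θ) (n : ℤ) {v : ℝ}
    (hv : v ∈ Icc 0 (ts (n + 1) - ts n)) :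
    ‖aMul (K (ts (n + 1)) (ts n + v)) (f (ts n + v))‖ ≤ ‖(1 : Mat q)‖ * exp (M * θ) * Cf :=
  (norm_aMul_le _ _).trans (mul_le_mul (norm_cellKernel_le hK hM hθ n hv) (hCf _) (norm_nonneg _)
    (by positivity))

lemma norm_cellIntegrand_sub_le (hK : IsPropagator A K) (hM : ∀ t, ‖A t‖ ≤ M)
    (hCf : ∀ t, ‖f t‖ ≤ Cf) (hθ : ∀ n, ts (n + 1) - ts n ≤ θ) {j j' : ℤ} {v κ ρ : ℝ}
    (hv : v ∈ Icc 0 (ts (j' + 1) - ts j'))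
    (hκ : ‖K (ts (j + 1)) (ts j + v) - K (ts (j' + 1)) (ts j' + v)‖ ≤ κ)
    (hρ : ‖f (ts j + v) - f (ts j' + v)‖ ≤ ρ) :
    ‖aMul (K (ts (j + 1)) (ts j + v)) (f (ts j + v)) -
      aMul (K (ts (j' + 1)) (ts j' + v)) (f (ts j' + v))‖ ≤
      κ * Cf + ‖(1 : Mat q)‖ * exp (M * θ) * ρ :=
  (norm_aMul_sub_aMul_le _ _ _ _).trans (add_le_add
    (mul_le_mul hκ (hCf _) (norm_nonneg _) ((norm_nonneg _).trans hκ))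
    (mul_le_mul (norm_cellKernel_le hK hM hθ _ hv) hρ (norm_nonneg _) (by positivity)))

lemma exists_norm_cellKernel_sub_le (hK : IsPropagator A K) (hM : ∀ t, ‖A t‖ ≤ M)
    (hθ : ∀ n, ts (n + 1) - ts n ≤ θ) :
    ∃ C, 0 ≤ C ∧ ∀ σ η m a n v, σ ≤ 1 / 2 → ShiftClose ts A f σ η m a →
      v ∈ Icc 0 (ts (n + m + 1) - ts (n + m)) →
      ‖K (ts (n + m + 1)) (ts (n + m) + v) - K (ts (n + a + 1)) (ts (n + a) + v)‖ ≤
        C * (η + 2 * σ) := by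
  obtain ⟨C, hC0, hC⟩ := hK.exists_norm_sub_shift_le hM θ
  refine ⟨C, hC0, fun σ η m a n v hσ hma hv => ?_⟩
  have hg₀ := abs_le.1 (hma.grid n)
  have := hC (ts m) (ts a) η (2 * σ) (ts (n + m) - ts m + v) (ts (n + m + 1) - ts m)
    (ts (n + a) - ts a + v) (ts (n + a + 1) - ts a) hma.coeff (by linarith [hv.2])
    (by linarith [hv.1, hθ (n + m)]) (by linarith) (hma.grid_succ n)
    (abs_le.2 ⟨by linarith, by linarith⟩)
  simpa only [sub_add_cancel, sub_add_eq_add_sub, add_sub_cancel_right,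
    add_comm v] using this

/-- The cells starting at `n + m` and at `n + a` are compared after translating both to `0`:
the kernels are close by `IsPropagator.exists_norm_sub_shift_le`, the forcing terms are close away
from the `4σ`-neighbourhood of the grid (a set of measure `O(σ)`), and the lengths differ
by `O(σ)`. -/
lemma exists_norm_cellIntegral_sub_le {N : ℕ} (hts : StrictMono ts)
    (htop : Tendsto ts atTop atTop) (hbot : Tendsto ts atBot atBot)
    (hθ : ∀ n, ts (n + 1) - ts n ≤ θ) (hK : IsPropagator A K) (hM : ∀ t, ‖A t‖ ≤ M)
    (hCf : ∀ t, ‖f t‖ ≤ Cf) (hf : LocallyIntegrable f) (hwin : WindowBounded ts (θ + 4) N) :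
    ∃ C, 0 ≤ C ∧ ∀ σ η, 0 < σ → σ ≤ η → σ ≤ 1 / 2 →
      (∀ τ', |τ'| ≤ 3 * σ → ∀ k s, s ∈ Icc (ts k) (ts (k + 1)) →
        s + τ' ∈ Icc (ts k) (ts (k + 1)) → ‖f (s + τ') - f s‖ ≤ η) →
      ∀ m a, ShiftClose ts A f σ (3 * η) m a →
        ∀ n, ‖cellIntegral ts K f (n + m) - cellIntegral ts K f (n + a)‖ ≤ C * η := by
  have hCf0 : 0 ≤ Cf := (norm_nonneg _).trans (hCf 0)
  have hθ0 : 0 ≤ θ := (sub_pos.2 (hts (lt_add_one 0))).le.trans (hθ 0)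
  obtain ⟨Ck, hCk0, hCk⟩ := exists_norm_cellKernel_sub_le (f := f) hK hM hθ
  set B := ‖(1 : Mat q)‖ * exp (M * θ)
  have hB : 0 ≤ B := by positivity
  refine ⟨(5 * Ck * Cf + 3 * B) * θ + 16 * B * Cf * (N + 1) + 4 * B * Cf, by positivity,
    fun σ η hσ hση hσ1 hδ m a hma n => ?_⟩
  obtain ⟨τ₁, hτ₁, τ₂, hτ₂, hτ⟩ := hma.forcing
  set S := (⋃ k, Icc (ts k - (ts (n + a) - τ₂) - 4 * σ) (ts k - (ts (n + a) - τ₂) + 4 * σ)) ∩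
    Icc 0 θ
  have hgood : ∀ v ∈ Ioc 0 (min (ts (n + m + 1) - ts (n + m)) (ts (n + a + 1) - ts (n + a))),
      v ∉ S → ‖aMul (K (ts (n + m + 1)) (ts (n + m) + v)) (f (ts (n + m) + v)) -
        aMul (K (ts (n + a + 1)) (ts (n + a) + v)) (f (ts (n + a) + v))‖ ≤
        (5 * Ck * Cf + 3 * B) * η := by
    intro v hv hvS
    have hvm : v ∈ Icc 0 (ts (n + m + 1) - ts (n + m)) := ⟨hv.1.le, hv.2.trans (min_le_left _ _)⟩
    have hva : v ∈ Icc 0 (ts (n + a + 1) - ts (n + a)) := ⟨hv.1.le, hv.2.trans (min_le_right _ _)⟩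
    have hforce := hma.norm_sub_le htop hbot hσ.le hδ hτ₁ hτ₂ hτ n
      (lt_abs_of_notMem_iUnion_Icc_inter ⟨hva.1, by linarith [hva.2, hθ (n + a)]⟩ hvS)
    refine (norm_cellIntegrand_sub_le hK hM hCf hθ hva (hCk σ (3 * η) m a n v hσ1 hma hvm)
      hforce).trans ?_
    nlinarith [mul_le_mul_of_nonneg_left hση (mul_nonneg hCk0 hCf0),
      mul_le_mul_of_nonneg_left hση hB]
  rw [cellIntegral_eq_integral_comp_add, cellIntegral_eq_integral_comp_add]
  refine (norm_intervalIntegral_sub_le (α := (5 * Ck * Cf + 3 * B) * η)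
    (V := (N + 1) * (2 * (4 * σ)))
    ((MeasurableSet.iUnion fun _ => measurableSet_Icc).inter measurableSet_Icc) (by positivity)
    (volume_iUnion_Icc_inter_le (ℓ := θ) hwin (by linarith))
    (sub_pos.2 (hts (lt_add_one _))).le (sub_pos.2 (hts (lt_add_one _))).le
    (mul_nonneg (by positivity) (hσ.le.trans hση)) (by positivity)
    (intervalIntegrable_cellIntegrand hK hM hf _) (intervalIntegrable_cellIntegrand hK hM hf _)
    (fun v hv => norm_cellIntegrand_le hK hM hCf hθ _ (Ioc_subset_Icc_self hv))
    (fun v hv => norm_cellIntegrand_le hK hM hCf hθ _ (Ioc_subset_Icc_self hv)) hgood).trans ?_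
  have hη : 0 ≤ η := hσ.le.trans hση
  have hBCf : 0 ≤ B * Cf := mul_nonneg hB hCf0
  nlinarith [mul_le_mul_of_nonneg_left ((min_le_left _ (ts (n + a + 1) - ts (n + a))).trans
      (hθ (n + m)))
      (mul_nonneg (by positivity : 0 ≤ 5 * Ck * Cf + 3 * B) hη),
    mul_le_mul_of_nonneg_left hση (mul_nonneg hBCf (by positivity : (0 : ℝ) ≤ N + 1)),
    mul_le_mul_of_nonneg_left (hma.abs_sub_sub_le n) hBCf, mul_le_mul_of_nonneg_left hση hBCf]

lemma exists_finite_range_norm_cellIntegral_sub_le (hts : StrictMono ts)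
    (htop : Tendsto ts atTop atTop) (hbot : Tendsto ts atBot atBot)
    (hθ : ∀ n, ts (n + 1) - ts n ≤ θ) (hA : APR A) (hequi : EquiAP ts) (hK : IsPropagator A K)
    (hCf : ∀ t, ‖f t‖ ≤ Cf) (hf : LocallyIntegrable f) (hf3 : H3cond ts f) {ε : ℝ} (hε : 0 < ε) :
    ∃ cl : ℤ → ℤ × ℤ × ℤ, (range cl).Finite ∧ ∀ m a, cl m = cl a →
      ∀ n, ‖cellIntegral ts K f (n + m) - cellIntegral ts K f (n + a)‖ ≤ ε := by
  obtain ⟨M, hM⟩ := hA.exists_norm_le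
  obtain ⟨N, hwin⟩ := hequi.exists_windowBounded hts htop hbot (θ + 4)
  obtain ⟨C, hC0, hC⟩ := exists_norm_cellIntegral_sub_le hts htop hbot hθ hK hM hCf hf hwin
  set η := ε / (C + 1)
  have hη : 0 < η := by positivity
  obtain ⟨-, δf, hδf, hfδ⟩ := hf3 η hη
  obtain ⟨δA, hδA, hAδ⟩ := Metric.uniformContinuous_iff_le.1 hA.uniformContinuous η hη
  set σ := min (min η (1 / 2)) (min (δf / 3) δA)
  have hσ : 0 < σ := by positivity
  have hση : σ ≤ η := (min_le_left _ _).trans (min_le_left _ _)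
  have hσδ : σ ≤ δf / 3 := (min_le_right _ _).trans (min_le_left _ _)
  obtain ⟨cl, hcl, hclose⟩ := exists_finite_range_shiftClose hequi hA (hf3 σ hσ).1 hσ hδA
    fun s s' h => by simpa only [dist_eq_norm] using hAδ h
  refine ⟨cl, hcl, fun m a hma n => (hC σ η hσ hση ((min_le_left _ _).trans (min_le_right _ _))
    (fun τ' hτ' => hfδ τ' (by linarith)) m a ((hclose m a hma).mono (by linarith)) n).trans ?_⟩
  exact (mul_le_mul_of_nonneg_right (le_add_of_nonneg_right zero_le_one) hη.le).trans_eq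
    (mul_div_cancel₀ _ (by positivity))

end Cell

theorem h_is_almost_periodic_general {q : ℕ}
    (ts : ℤ → ℝ) (hts : StrictMono ts)
    (htop : Tendsto ts atTop atTop) (hbot : Tendsto ts atBot atBot)
    (hbdd : BddAbove (Set.range fun n : ℤ => ts (n + 1) - ts n))
    (A : ℝ → Mat q) (hA : APR A) (hEqui : EquiAP ts)
    (X : ℝ → Mat q) (hX : ∀ t : ℝ, HasDerivAt X (A t * X t) t)
    (hXinv : ∀ t : ℝ, IsUnit (X t))
    (f : ℝ → Vec q) (hfbdd : ∃ C : ℝ, ∀ t : ℝ, ‖f t‖ ≤ C)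
    (hfloc : LocallyIntegrable f) (hf3 : H3cond ts f) :
    APZ (fun n : ℤ => ∫ u in (ts n)..(ts (n + 1)),
      aMul (X (ts (n + 1)) * (X u)⁻¹) (f u)) := by
  obtain ⟨θ, hθ⟩ := hbdd
  obtain ⟨Cf, hCf⟩ := hfbdd
  exact APZ.of_finite_range fun ε hε => exists_finite_range_norm_cellIntegral_sub_le hts htop hbot
    (fun n => hθ ⟨n, rfl⟩) hA hEqui (isPropagator_mul_inv hX hXinv) hCf hfloc hf3 hε

/-- if `A` is almost periodic, `(t_n^{(k)})` is equipotentially almost periodic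
and `f` is bounded, locally integrable and satisfies `(H3)`, then the sequence
`h(n) = ∫_{t_n}^{t_{n+1}} X(t_{n+1},u) f(u) du` is an almost periodic sequence. -/
theorem h_is_almost_periodic {q : ℕ} (hq : 1 ≤ q)
    (ts : ℤ → ℝ) (hts : StrictMono ts)
    (htop : Tendsto ts atTop atTop) (hbot : Tendsto ts atBot atBot)
    (hbdd : BddAbove (Set.range fun n : ℤ => ts (n + 1) - ts n))
    (A : ℝ → Mat q) (hA : APR A) (hEqui : EquiAP ts)
    (X : ℝ → Mat q) (hX : ∀ t : ℝ, HasDerivAt X (A t * X t) t)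
    (hXinv : ∀ t : ℝ, IsUnit (X t))
    (f : ℝ → Vec q) (hfbdd : ∃ C : ℝ, ∀ t : ℝ, ‖f t‖ ≤ C)
    (hfloc : LocallyIntegrable f) (hf3 : H3cond ts f) :
    APZ (fun n : ℤ => ∫ u in (ts n)..(ts (n + 1)),
      aMul (X (ts (n + 1)) * (X u)⁻¹) (f u)) :=
  h_is_almost_periodic_general ts hts htop hbot hbdd A hA hEqui X hX hXinv f hfbdd hfloc hf3
end
end

section
/- Let A, B, f be continuous with A bounded, and let c : ℤ → ℂ^q satisfy c(n+1) = H(n)c(n) + h(n) for all n ∈ ℤ, where H(n) = Z_n(t_{n+1}) and h(n) = ∫_{t_n}^{t_{n+1}} X(t_{n+1}, u) f(u) du. Define y : ℝ → ℂ^q by y(t) = Z_n(t) c(n) + ∫_{t_n}^{t} X(t,u) f(u) du for t ∈ [t_n, t_{n+1}). Then y is continuous on ℝ, y(t_n) = c(n) for all n ∈ ℤ, and y is a solution of the DEPCAG y'(t) = A(t)y(t) + B(t)y(γ⁰(t)) + f(t). -/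
open scoped Matrix
open MeasureTheory Filter

attribute [local instance] Matrix.frobeniusSeminormedAddCommGroup
  Matrix.frobeniusNormedAddCommGroup Matrix.frobeniusNormedSpace
  Matrix.frobeniusNormedRing Matrix.frobeniusNormedAlgebra Matrix.frobeniusIsBoundedSMul

noncomputable section

/-- `X(t,s) = X(t) X(s)⁻¹`. -/
def XX {q : ℕ} (X : ℝ → Mat q) (t s : ℝ) : Mat q := X t * (X s)⁻¹

/-- `𝒥_n(t) = I + ∫_{t_n}^t X(t_n,u) B(u) du`. -/
def Jmat {q : ℕ} (X B : ℝ → Mat q) (ts : ℤ → ℝ) (n : ℤ) (r : ℝ) : Mat q :=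
  1 + ∫ u in (ts n)..r, XX X (ts n) u * B u

/-- `Z_n(t) = X(t,t_n) 𝒥_n(t)`. -/
def Zmat {q : ℕ} (X B : ℝ → Mat q) (ts : ℤ → ℝ) (n : ℤ) (r : ℝ) : Mat q :=
  XX X r (ts n) * Jmat X B ts n r


/-! Factor the variation-of-constants formula on `[t_n, t_{n+1}]` as `X(r) G_n(r)` with
`G_n(r) = X(t_n)⁻¹ 𝒥_n(r) c(n) + ∫_{t_n}^r X(u)⁻¹ f(u) du`. Since `𝒥_n' = X(t_n, r) B(r)`, one gets
`G_n' = X(r)⁻¹ (B(r) c(n) + f(r))`, and the product rule with `X' = A X` gives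
`y' = A y + B c(n) + f`. The formula takes the value `c(n)` at `t_n`, and the difference equation
says exactly that the formula on `[t_n, t_{n+1}]` ends at `c(n+1)`; so the pieces agree on closed
intervals and glue to a continuous function. -/

open Set Topology

section MatrixAction

variable {q : ℕ}

theorem aMul_mul (M N : Mat q) (v : Vec q) : aMul (M * N) v = aMul M (aMul N v) := by
  simp [aMul]

theorem aMul_one (v : Vec q) : aMul 1 v = v := by
  simp [aMul]

theorem aMul_add (M : Mat q) (u v : Vec q) : aMul M (u + v) = aMul M u + aMul M v :=
  map_add _ _ _

theorem aMul_zero (M : Mat q) : aMul M 0 = 0 :=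
  map_zero _

theorem aMul_mul_inv_cancel {M : Mat q} (hM : IsUnit M) (v : Vec q) : aMul M (aMul M⁻¹ v) = v := by
  rw [← aMul_mul, Matrix.mul_nonsing_inv _ ((Matrix.isUnit_iff_isUnit_det _).mp hM), aMul_one]

variable (q) in
def aMulCLM : Mat q →L[ℝ] Vec q →L[ℝ] Vec q :=
  (ContinuousLinearMap.restrictScalarsL ℂ (Vec q) (Vec q) ℝ ℝ).comp
    (LinearMap.toContinuousLinearMap
      ((Matrix.toEuclideanCLM (n := Fin q) (𝕜 := ℂ)).toAlgEquiv.toLinearMap.restrictScalars ℝ))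

theorem intervalIntegral_aMul (M : Mat q) {g : ℝ → Vec q} {a b : ℝ}
    (hg : IntervalIntegrable g volume a b) :
    ∫ u in a..b, aMul M (g u) = aMul M (∫ u in a..b, g u) :=
  (aMulCLM q M).intervalIntegral_comp_comm hg

theorem Continuous.aMul {M : ℝ → Mat q} {v : ℝ → Vec q} (hM : Continuous M) (hv : Continuous v) :
    Continuous fun s => aMul (M s) (v s) :=
  ((aMulCLM q).continuous.comp hM).clm_apply hv

theorem HasDerivAt.aMul {M : ℝ → Mat q} {v : ℝ → Vec q} {M' : Mat q} {v' : Vec q} {r : ℝ}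
    (hM : HasDerivAt M M' r) (hv : HasDerivAt v v' r) :
    HasDerivAt (fun s => aMul (M s) (v s)) (aMul M' (v r) + aMul (M r) v') r :=
  ((aMulCLM q).hasFDerivAt.comp_hasDerivAt r hM).clm_apply hv

end MatrixAction

theorem Continuous.matrix_inv_of_isUnit {α 𝕜 n : Type*} [TopologicalSpace α] [NormedField 𝕜]
    [Fintype n] [DecidableEq n] {M : α → Matrix n n 𝕜} (hM : Continuous M)
    (hunit : ∀ a, IsUnit (M a)) : Continuous fun a => (M a)⁻¹ :=
  continuous_iff_continuousAt.2 fun a =>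
    (continuousAt_matrix_inv _ (by
      rw [Ring.inverse_eq_inv']
      exact continuousAt_inv₀ ((Matrix.isUnit_iff_isUnit_det _).mp (hunit a)).ne_zero)).comp
      hM.continuousAt

section VariationOfConstants

variable {q : ℕ} {A X B : ℝ → Mat q}

theorem hasDerivAt_fundamental_aMul {r : ℝ} (hX : HasDerivAt X (A r * X r) r)
    (hXr : IsUnit (X r)) {G : ℝ → Vec q} {g : Vec q} (hG : HasDerivAt G (aMul (X r)⁻¹ g) r) :
    HasDerivAt (fun s => aMul (X s) (G s)) (aMul (A r) (aMul (X r) (G r)) + g) r := by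
  refine (hX.aMul hG).congr_deriv ?_
  rw [aMul_mul, aMul_mul_inv_cancel hXr]

variable (X B) in
def depcagPiece (ts : ℤ → ℝ) (c : ℤ → Vec q) (f : ℝ → Vec q) (n : ℤ) (r : ℝ) : Vec q :=
  aMul (Zmat X B ts n r) (c n) + ∫ u in (ts n)..r, aMul (XX X r u) (f u)

variable {ts : ℤ → ℝ} {c : ℤ → Vec q} {f : ℝ → Vec q}

theorem depcagPiece_self (hXinv : ∀ t, IsUnit (X t)) (n : ℤ) :
    depcagPiece X B ts c f n (ts n) = c n := by
  rw [depcagPiece, Zmat, Jmat, XX, intervalIntegral.integral_same, intervalIntegral.integral_same,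
    add_zero, add_zero, mul_one, aMul_mul, aMul_mul_inv_cancel (hXinv _)]

theorem depcagPiece_eq_aMul (hXc : Continuous X) (hXinv : ∀ t, IsUnit (X t)) (hfc : Continuous f)
    (n : ℤ) : depcagPiece X B ts c f n = fun r => aMul (X r)
      (aMul ((X (ts n))⁻¹ * Jmat X B ts n r) (c n) + ∫ u in (ts n)..r, aMul (X u)⁻¹ (f u)) := by
  funext r
  have hint : IntervalIntegrable (fun u => aMul (X u)⁻¹ (f u)) volume (ts n) r :=
    ((hXc.matrix_inv_of_isUnit hXinv).aMul hfc).intervalIntegrable (ts n) r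
  simp only [depcagPiece, Zmat, XX, aMul_add, ← intervalIntegral_aMul _ hint, ← aMul_mul,
    mul_assoc]

theorem hasDerivAt_depcagPiece (hX : ∀ t, HasDerivAt X (A t * X t) t)
    (hXinv : ∀ t, IsUnit (X t)) (hBc : Continuous B) (hfc : Continuous f) (n : ℤ) (r : ℝ) :
    HasDerivAt (depcagPiece X B ts c f n)
      (aMul (A r) (depcagPiece X B ts c f n r) + (aMul (B r) (c n) + f r)) r := by
  have hXc : Continuous X := continuous_iff_continuousAt.2 fun t => (hX t).continuousAt
  have hXi : Continuous fun t => (X t)⁻¹ := hXc.matrix_inv_of_isUnit hXinv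
  have hJ : HasDerivAt (Jmat X B ts n) (XX X (ts n) r * B r) r :=
    (((continuous_const.mul hXi).mul hBc).integral_hasStrictDerivAt (ts n) r).hasDerivAt
      |>.const_add 1
  have hG : HasDerivAt (fun s => aMul ((X (ts n))⁻¹ * Jmat X B ts n s) (c n) +
      ∫ u in (ts n)..s, aMul (X u)⁻¹ (f u)) (aMul (X r)⁻¹ (aMul (B r) (c n) + f r)) r := by
    refine (((hJ.const_mul (X (ts n))⁻¹).aMul (hasDerivAt_const r (c n))).add
      ((hXi.aMul hfc).integral_hasStrictDerivAt (ts n) r).hasDerivAt).congr_deriv ?_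
    rw [XX, mul_assoc, Matrix.nonsing_inv_mul_cancel_left _ _
      ((Matrix.isUnit_iff_isUnit_det _).mp (hXinv _)), aMul_add, aMul_mul, aMul_zero, add_zero]
  rw [depcagPiece_eq_aMul hXc hXinv hfc]
  exact hasDerivAt_fundamental_aMul (hX r) (hXinv r) hG

end VariationOfConstants

theorem exists_mem_Ico_add_one_of_tendsto {α : Type*} [LinearOrder α] [NoMaxOrder α]
    {ts : ℤ → α} (htop : Tendsto ts atTop atTop) (hbot : Tendsto ts atBot atBot) (t : α) :
    ∃ n, t ∈ Ico (ts n) (ts (n + 1)) := by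
  obtain ⟨N, hN⟩ := (htop.eventually_gt_atTop t).exists_forall_of_atTop
  obtain ⟨M, hM⟩ := (hbot.eventually (eventually_le_atBot t)).exists
  obtain ⟨n, hn, hmax⟩ := Int.exists_greatest_of_bdd
    ⟨N, fun z hz => not_lt.1 fun hNz => (hN z hNz.le).not_ge hz⟩ ⟨M, hM⟩
  exact ⟨n, hn, not_le.1 fun h => (hmax _ h).not_gt (lt_add_one n)⟩

theorem StrictMono.continuous_of_continuousOn_Icc {α β : Type*} [LinearOrder α] [NoMaxOrder α]
    [TopologicalSpace α] [OrderTopology α] [TopologicalSpace β] {ts : ℤ → α} (hts : StrictMono ts)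
    (htop : Tendsto ts atTop atTop) (hbot : Tendsto ts atBot atBot) {y : α → β}
    (hy : ∀ n, ContinuousOn y (Icc (ts n) (ts (n + 1)))) : Continuous y := by
  refine continuous_iff_continuousAt.2 fun t => ?_
  obtain ⟨n, hn⟩ := exists_mem_Ico_add_one_of_tendsto htop hbot t
  have hunion :
      Icc (ts (n - 1)) (ts n) ∪ Icc (ts n) (ts (n + 1)) = Icc (ts (n - 1)) (ts (n + 1)) :=
    Icc_union_Icc_eq_Icc (hts.monotone (by omega)) (hts.monotone (by omega))
  have hleft := hy (n - 1)
  rw [sub_add_cancel] at hleft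
  refine ((hleft.union_of_isClosed (hy n) isClosed_Icc isClosed_Icc).continuousAt ?_)
  rw [hunion]
  exact Icc_mem_nhds ((hts (by omega)).trans_le hn.1) hn.2

theorem depcag_solution_from_difference_solution_general {q : ℕ}
    (ts : ℤ → ℝ) (hts : StrictMono ts)
    (htop : Tendsto ts atTop atTop) (hbot : Tendsto ts atBot atBot)
    (A B : ℝ → Mat q) (hBcont : Continuous B)
    (f : ℝ → Vec q) (hfcont : Continuous f)
    (X : ℝ → Mat q) (hX : ∀ t : ℝ, HasDerivAt X (A t * X t) t)
    (hXinv : ∀ t : ℝ, IsUnit (X t))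
    (c : ℤ → Vec q)
    (hc : ∀ n : ℤ, c (n + 1) = aMul (Zmat X B ts n (ts (n + 1))) (c n) +
      ∫ u in (ts n)..(ts (n + 1)), aMul (XX X (ts (n + 1)) u) (f u))
    (y : ℝ → Vec q)
    (hy : ∀ n : ℤ, ∀ r ∈ Set.Ico (ts n) (ts (n + 1)),
      y r = aMul (Zmat X B ts n r) (c n) + ∫ u in (ts n)..r, aMul (XX X r u) (f u)) :
    Continuous y ∧ (∀ n : ℤ, y (ts n) = c n) ∧
      ∀ n : ℤ, ∀ r ∈ Set.Ioo (ts n) (ts (n + 1)),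
        HasDerivAt y (aMul (A r) (y r) + aMul (B r) (y (ts n)) + f r) r := by
  have hderiv := hasDerivAt_depcagPiece (ts := ts) (c := c) hX hXinv hBcont hfcont
  have hnode : ∀ n, y (ts n) = c n := fun n =>
    (hy n _ ⟨le_rfl, hts (lt_add_one n)⟩).trans (depcagPiece_self hXinv n)
  have hpiece : ∀ n, EqOn y (depcagPiece X B ts c f n) (Icc (ts n) (ts (n + 1))) := by
    intro n r hr
    rcases hr.2.lt_or_eq with hlt | rfl
    · exact hy n r ⟨hr.1, hlt⟩
    · exact (hnode (n + 1)).trans (hc n)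
  refine ⟨hts.continuous_of_continuousOn_Icc htop hbot fun n => ?_, hnode, fun n r hr => ?_⟩
  · exact (continuous_iff_continuousAt.2 fun r => (hderiv n r).continuousAt).continuousOn.congr
      (hpiece n)
  · have hloc : y =ᶠ[𝓝 r] depcagPiece X B ts c f n :=
      eventuallyEq_of_mem (Ioo_mem_nhds hr.1 hr.2) fun s hs => hpiece n ⟨hs.1.le, hs.2.le⟩
    rw [hnode, hpiece n ⟨hr.1.le, hr.2.le⟩, add_assoc]
    exact (hderiv n r).congr_of_eventuallyEq hloc

/-- the function built from a solution `c` of the difference equation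
`c(n+1) = H(n) c(n) + h(n)` by the variation-of-constants formula on each `[t_n, t_{n+1})`
is continuous, interpolates `c` at the nodes `t_n`, and solves the DEPCAG
`y' = A(t) y + B(t) y(γ⁰(t)) + f(t)`. -/
theorem depcag_solution_from_difference_solution {q : ℕ} (hq : 1 ≤ q)
    (ts : ℤ → ℝ) (hts : StrictMono ts)
    (htop : Tendsto ts atTop atTop) (hbot : Tendsto ts atBot atBot)
    (A B : ℝ → Mat q) (hAcont : Continuous A) (hBcont : Continuous B)
    (hAbdd : ∃ C : ℝ, ∀ t : ℝ, ‖A t‖ ≤ C)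
    (f : ℝ → Vec q) (hfcont : Continuous f)
    (X : ℝ → Mat q) (hX : ∀ t : ℝ, HasDerivAt X (A t * X t) t)
    (hXinv : ∀ t : ℝ, IsUnit (X t))
    (c : ℤ → Vec q)
    (hc : ∀ n : ℤ, c (n + 1) = aMul (Zmat X B ts n (ts (n + 1))) (c n) +
      ∫ u in (ts n)..(ts (n + 1)), aMul (XX X (ts (n + 1)) u) (f u))
    (y : ℝ → Vec q)
    (hy : ∀ n : ℤ, ∀ r ∈ Set.Ico (ts n) (ts (n + 1)),
      y r = aMul (Zmat X B ts n r) (c n) + ∫ u in (ts n)..r, aMul (XX X r u) (f u)) :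
    Continuous y ∧ (∀ n : ℤ, y (ts n) = c n) ∧
      ∀ n : ℤ, ∀ r ∈ Set.Ioo (ts n) (ts (n + 1)),
        HasDerivAt y (aMul (A r) (y r) + aMul (B r) (y (ts n)) + f r) r :=
  depcag_solution_from_difference_solution_general ts hts htop hbot A B hBcont f hfcont X hX hXinv c
    hc y hy
end
end
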